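/- arXiv:1702.04777 — 2 statements merged into one kernel-verified Lean document; each statement's English description precedes it below -/
import Mathlib

section
/- Fix real constants μ0 > 0 and H > 0, and for each integer n ≥ 1 let k_n(H) be the unique solution k of μ0 + k·tan(k·H) = 0 in ((2n−1)π/(2H), nπ/H), a twice differentiable function of H. Then one has the exact identity H·(d²k_n/dH²) + 2·(dk_n/dH) = −2·(dk_n/dH)·(H·μ0 − 1)·( (H·(dk_n/dH) + k_n)/k_n )², and consequently there exists a constant C > 0 such that |H·(d²k_n/dH²) + 2·(dk_n/dH)| ≤ C·n^{−3} for all n ≥ 1 (equivalently, ∂_x²(k_n H) along any C² depth profile is O(n^{−1})). -/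
/-!
On the `n`-th branch `θ = nπ - kH ∈ (0, π/2)` satisfies `tan θ = μ₀/k`, so
`H = (nπ - arctan (μ₀/k)) / k`: `kₙ` is the inverse of this explicit, strictly decreasing
function of `k`. The inverse function theorem gives `k' = -kA/D` with `A = k² + μ₀²`,
`D = HA - μ₀`; differentiating once more, `Hk'' + 2k' = 2(Hμ₀ - 1)μ₀² kA/D³`, which is the
identity because `Hk' + k = -μ₀k/D`. Finally `kH ≥ n` and `D ≥ HA/2` give `kA/D³ ≤ 8/n³`.
-/

open Real Set Filter Topology

noncomputable def dispersionDepth (μ0 : ℝ) (n : ℕ) (x : ℝ) : ℝ :=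
  ((n : ℝ) * π - arctan (μ0 / x)) / x

section DispersionDepth

variable {μ0 : ℝ} {n : ℕ} {x : ℝ}

theorem eq_nat_mul_pi_sub_arctan_of_add_mul_tan_eq_zero {k t : ℝ} (hk : k ≠ 0)
    (ht : t ∈ Ioo ((2 * (n : ℝ) - 1) * π / 2) ((n : ℝ) * π)) (h : μ0 + k * tan t = 0) :
    t = n * π - arctan (μ0 / k) := by
  have htan : tan (n * π - t) = μ0 / k := by
    rw [tan_nat_mul_pi_sub, eq_div_iff hk]
    linarith
  rw [arctan_eq_of_tan_eq htan ⟨by linarith [ht.2, pi_pos], by linarith [ht.1]⟩]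
  ring

theorem mul_dispersionDepth (hx : x ≠ 0) :
    x * dispersionDepth μ0 n x = n * π - arctan (μ0 / x) :=
  mul_div_cancel₀ _ hx

theorem natCast_le_mul_dispersionDepth (hn : 1 ≤ n) (hx : x ≠ 0) :
    (n : ℝ) ≤ x * dispersionDepth μ0 n x := by
  have hn' : (1 : ℝ) ≤ n := by exact_mod_cast hn
  rw [mul_dispersionDepth hx]
  nlinarith [arctan_lt_pi_div_two (μ0 / x), pi_gt_three]

theorem hasDerivAt_dispersionDepth (hx : x ≠ 0) :
    HasDerivAt (dispersionDepth μ0 n)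
      ((μ0 / (x ^ 2 + μ0 ^ 2) - dispersionDepth μ0 n x) / x) x := by
  have hquot : HasDerivAt (fun y => μ0 / y) (-(μ0 / x ^ 2)) x := by
    simpa [div_eq_mul_inv] using (hasDerivAt_inv hx).const_mul μ0
  refine (((hasDerivAt_const x ((n : ℝ) * π)).fun_sub hquot.arctan).fun_div
    (hasDerivAt_id' x) hx).congr_deriv ?_
  have : x ^ 2 + μ0 ^ 2 ≠ 0 := by positivity
  simp only [dispersionDepth]
  field_simp
  ring

theorem div_sq_add_sq_lt_dispersionDepth (hn : 1 ≤ n) (hx : 0 < x) :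
    μ0 / (x ^ 2 + μ0 ^ 2) < dispersionDepth μ0 n x := by
  have h1 : 1 ≤ x * dispersionDepth μ0 n x :=
    (by exact_mod_cast hn : (1 : ℝ) ≤ n).trans (natCast_le_mul_dispersionDepth hn hx.ne')
  rw [div_lt_iff₀ (by positivity)]
  nlinarith [sq_nonneg (x - μ0), sq_nonneg μ0]

theorem dispersionDepth_strictAntiOn (hn : 1 ≤ n) :
    StrictAntiOn (dispersionDepth μ0 n) (Ioi 0) := by
  refine strictAntiOn_of_deriv_neg (convex_Ioi 0)
    (fun y hy => (hasDerivAt_dispersionDepth (ne_of_gt hy)).continuousAt.continuousWithinAt)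
    fun y hy => ?_
  rw [interior_Ioi] at hy
  rw [(hasDerivAt_dispersionDepth (ne_of_gt hy)).deriv]
  exact div_neg_of_neg_of_pos (sub_neg.2 (div_sq_add_sq_lt_dispersionDepth hn hy)) hy

end DispersionDepth

theorem mul_sq_add_sq_le_two_mul_sub {μ0 H k : ℝ} (hμ0 : 0 ≤ μ0) (hH : 0 ≤ H)
    (hkH : 1 ≤ k * H) :
    H * (k ^ 2 + μ0 ^ 2) ≤ 2 * (H * (k ^ 2 + μ0 ^ 2) - μ0) := by
  nlinarith [mul_nonneg hH (sq_nonneg (k - μ0)), mul_nonneg hμ0 (sub_nonneg.2 hkH)]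

theorem abs_div_cube_le {μ0 H k x : ℝ} (hμ0 : 0 ≤ μ0) (hH : 0 < H) (hk : 0 < k) (hx : 1 ≤ x)
    (hxk : x ≤ k * H) :
    |2 * (H * μ0 - 1) * μ0 ^ 2 * (k * (k ^ 2 + μ0 ^ 2)) / (H * (k ^ 2 + μ0 ^ 2) - μ0) ^ 3| ≤
      16 * |H * μ0 - 1| * μ0 ^ 2 / x ^ 3 := by
  set A := k ^ 2 + μ0 ^ 2
  have hA : 0 < H * A := by positivity
  have hD := mul_sq_add_sq_le_two_mul_sub hμ0 hH.le (hx.trans hxk)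
  have hD0 : 0 < H * A - μ0 := by linarith
  have hdecay : k * A / (H * A - μ0) ^ 3 ≤ 8 / x ^ 3 := by
    rw [div_le_div_iff₀ (by positivity) (by positivity)]
    have hk4 : k ^ 4 ≤ A ^ 2 := by nlinarith [sq_nonneg μ0, sq_nonneg k]
    calc k * A * x ^ 3 ≤ k * A * (k * H) ^ 3 := by gcongr
      _ = H ^ 3 * A * k ^ 4 := by ring
      _ ≤ H ^ 3 * A * A ^ 2 := by gcongr
      _ = (H * A) ^ 3 := by ring
      _ ≤ (2 * (H * A - μ0)) ^ 3 := by gcongr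
      _ = 8 * (H * A - μ0) ^ 3 := by ring
  calc |2 * (H * μ0 - 1) * μ0 ^ 2 * (k * A) / (H * A - μ0) ^ 3|
      = 2 * |H * μ0 - 1| * μ0 ^ 2 * (k * A / (H * A - μ0) ^ 3) := by
        rw [mul_div_assoc, abs_mul, abs_of_nonneg (by positivity : 0 ≤ k * A / (H * A - μ0) ^ 3),
          abs_mul, abs_mul, abs_two, abs_sq]
    _ ≤ 2 * |H * μ0 - 1| * μ0 ^ 2 * (8 / x ^ 3) := by gcongr
    _ = 16 * |H * μ0 - 1| * μ0 ^ 2 / x ^ 3 := by ring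

def IsDispersionBranch (μ0 : ℝ) (n : ℕ) (f : ℝ → ℝ) : Prop :=
  ∀ H, 0 < H → 0 < f H ∧ dispersionDepth μ0 n (f H) = H

theorem isDispersionBranch_of_mem_Ioo {μ0 : ℝ} {n : ℕ} {f : ℝ → ℝ} (hn : 1 ≤ n)
    (hf : ∀ H, 0 < H → f H ∈ Ioo ((2 * (n : ℝ) - 1) * π / (2 * H)) ((n : ℝ) * π / H) ∧
      μ0 + f H * tan (f H * H) = 0) :
    IsDispersionBranch μ0 n f := by
  intro H hH
  obtain ⟨⟨hlow, hup⟩, hrel⟩ := hf H hH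
  have hn' : (1 : ℝ) ≤ n := by exact_mod_cast hn
  rw [div_lt_iff₀ (by positivity)] at hlow
  rw [lt_div_iff₀ hH] at hup
  have hpos : 0 < f H := by nlinarith [pi_pos]
  refine ⟨hpos, ?_⟩
  rw [dispersionDepth, ← eq_nat_mul_pi_sub_arctan_of_add_mul_tan_eq_zero hpos.ne'
    ⟨by linarith, hup⟩ hrel]
  field_simp

namespace IsDispersionBranch

variable {μ0 : ℝ} {n : ℕ} {f : ℝ → ℝ} {H : ℝ}

theorem natCast_le_mul (hf : IsDispersionBranch μ0 n f) (hn : 1 ≤ n) (hH : 0 < H) :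
    (n : ℝ) ≤ f H * H := by
  obtain ⟨hpos, hdepth⟩ := hf H hH
  simpa only [hdepth] using natCast_le_mul_dispersionDepth (μ0 := μ0) hn hpos.ne'

theorem strictAntiOn (hf : IsDispersionBranch μ0 n f) (hn : 1 ≤ n) :
    StrictAntiOn f (Ioi 0) := fun a ha b hb hab => by
  have hg := dispersionDepth_strictAntiOn (μ0 := μ0) hn
  rw [← hg.lt_iff_gt (hf a ha).1 (hf b hb).1, (hf a ha).2, (hf b hb).2]
  exact hab

theorem Ioi_subset_image (hf : IsDispersionBranch μ0 n f) (hn : 1 ≤ n) :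
    Ioi 0 ⊆ f '' Ioi 0 := fun x hx => by
  have hdepth : 0 < dispersionDepth μ0 n x := by
    have := natCast_le_mul_dispersionDepth (μ0 := μ0) hn (ne_of_gt hx)
    have hn' : (1 : ℝ) ≤ n := by exact_mod_cast hn
    exact pos_of_mul_pos_right (by linarith) (le_of_lt hx)
  obtain ⟨hpos, hinv⟩ := hf _ hdepth
  exact ⟨_, hdepth, (dispersionDepth_strictAntiOn hn).injOn hpos hx hinv⟩

theorem continuousAt (hf : IsDispersionBranch μ0 n f) (hn : 1 ≤ n) (hH : 0 < H) :
    ContinuousAt f H := by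
  have hmono : StrictMonoOn (fun y => -f y) (Ioi 0) := fun a ha b hb hab =>
    neg_lt_neg (hf.strictAntiOn hn ha hb hab)
  have himage : (fun y => -f y) '' Ioi 0 ∈ 𝓝 (-f H) := by
    refine mem_of_superset (Iio_mem_nhds (neg_neg_of_pos (hf H hH).1)) fun y (hy : y < 0) => ?_
    obtain ⟨x, hx, hfx⟩ := hf.Ioi_subset_image hn (neg_pos.2 hy)
    exact ⟨x, hx, by simp [hfx]⟩
  convert (hmono.continuousAt_of_image_mem_nhds (Ioi_mem_nhds hH) himage).neg using 1
  ext y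
  simp

theorem hasDerivAt (hf : IsDispersionBranch μ0 n f) (hn : 1 ≤ n) (hH : 0 < H) :
    HasDerivAt f (-(f H * (f H ^ 2 + μ0 ^ 2)) / (H * (f H ^ 2 + μ0 ^ 2) - μ0)) H := by
  obtain ⟨hpos, hdepth⟩ := hf H hH
  have hg := hasDerivAt_dispersionDepth (μ0 := μ0) (n := n) hpos.ne'
  rw [hdepth] at hg
  have hg' : (μ0 / (f H ^ 2 + μ0 ^ 2) - H) / f H ≠ 0 := by
    have := div_sq_add_sq_lt_dispersionDepth (μ0 := μ0) hn hpos
    rw [hdepth] at this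
    exact div_ne_zero (by linarith) hpos.ne'
  have hleft : ∀ᶠ y in 𝓝 H, dispersionDepth μ0 n (f y) = y :=
    eventually_of_mem (Ioi_mem_nhds hH) fun y hy => (hf y hy).2
  refine (HasDerivAt.of_local_left_inverse (hf.continuousAt hn hH) hg hg' hleft).congr_deriv ?_
  have hA : 0 < f H ^ 2 + μ0 ^ 2 := by positivity
  rw [show (μ0 / (f H ^ 2 + μ0 ^ 2) - H) / f H =
      -((H * (f H ^ 2 + μ0 ^ 2) - μ0) / (f H * (f H ^ 2 + μ0 ^ 2))) by field_simp; ring,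
    inv_neg, inv_div, neg_div]

theorem mul_sq_add_sq_sub_pos (hf : IsDispersionBranch μ0 n f) (hn : 1 ≤ n) (hμ0 : 0 ≤ μ0)
    (hH : 0 < H) : 0 < H * (f H ^ 2 + μ0 ^ 2) - μ0 := by
  have hD := mul_sq_add_sq_le_two_mul_sub hμ0 hH.le
    ((by exact_mod_cast hn : (1 : ℝ) ≤ n).trans (hf.natCast_le_mul hn hH))
  have : 0 < H * (f H ^ 2 + μ0 ^ 2) := by have := (hf H hH).1; positivity
  linarith

theorem mul_deriv_deriv_add_two_mul_deriv (hf : IsDispersionBranch μ0 n f) (hn : 1 ≤ n)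
    (hμ0 : 0 ≤ μ0) (hH : 0 < H) :
    H * deriv (deriv f) H + 2 * deriv f H =
      2 * (H * μ0 - 1) * μ0 ^ 2 * (f H * (f H ^ 2 + μ0 ^ 2)) /
        (H * (f H ^ 2 + μ0 ^ 2) - μ0) ^ 3 := by
  have hD := (hf.mul_sq_add_sq_sub_pos hn hμ0 hH).ne'
  have hk := hf.hasDerivAt hn hH
  have hA := (hk.fun_pow 2).add_const (μ0 ^ 2)
  have hslope :=
    (hk.fun_mul hA).fun_neg.fun_div (((hasDerivAt_id' H).fun_mul hA).sub_const μ0) hD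
  have hderiv : deriv f =ᶠ[𝓝 H]
      fun y => -(f y * (f y ^ 2 + μ0 ^ 2)) / (y * (f y ^ 2 + μ0 ^ 2) - μ0) :=
    eventually_of_mem (Ioi_mem_nhds hH) fun y hy => (hf.hasDerivAt hn hy).deriv
  rw [(hslope.congr_of_eventuallyEq hderiv).deriv, hk.deriv]
  field_simp
  ring

end IsDispersionBranch

/-- Identity (A28) and estimate (A24b) of Lemma A1:
`H·(d²kₙ/dH²) + 2(dkₙ/dH) = −2(dkₙ/dH)(Hμ₀ − 1)((H·(dkₙ/dH) + kₙ)/kₙ)²`,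
hence `|H·(d²kₙ/dH²) + 2(dkₙ/dH)| ≤ C·n⁻³`, i.e. `∂ₓ²(kₙH) = O(n⁻¹)` along any
C² depth profile. -/
theorem eigenvalue_second_cancellation_identity (μ0 H : ℝ) (hμ0 : 0 < μ0) (hH : 0 < H)
    (k : ℕ → ℝ → ℝ)
    (hk : ∀ n : ℕ, 1 ≤ n → ∀ H' : ℝ, 0 < H' →
      k n H' ∈ Set.Ioo ((2 * (n : ℝ) - 1) * π / (2 * H')) ((n : ℝ) * π / H') ∧
      μ0 + k n H' * Real.tan (k n H' * H') = 0) :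
    (∀ n : ℕ, 1 ≤ n →
      H * deriv (deriv (k n)) H + 2 * deriv (k n) H =
        -2 * deriv (k n) H * (H * μ0 - 1) *
          ((H * deriv (k n) H + k n H) / k n H) ^ 2) ∧
    ∃ C : ℝ, 0 < C ∧ ∀ n : ℕ, 1 ≤ n →
      |H * deriv (deriv (k n)) H + 2 * deriv (k n) H| ≤ C / (n : ℝ) ^ 3 := by
  have hbranch n (hn : 1 ≤ n) : IsDispersionBranch μ0 n (k n) :=
    isDispersionBranch_of_mem_Ioo hn (hk n hn)
  refine ⟨fun n hn => ?_, 16 * |H * μ0 - 1| * μ0 ^ 2 + 1, by positivity, fun n hn => ?_⟩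
  · have hpos := ((hbranch n hn) H hH).1
    have hD := ((hbranch n hn).mul_sq_add_sq_sub_pos hn hμ0.le hH).ne'
    rw [(hbranch n hn).mul_deriv_deriv_add_two_mul_deriv hn hμ0.le hH,
      ((hbranch n hn).hasDerivAt hn hH).deriv]
    field_simp
    ring
  · rw [(hbranch n hn).mul_deriv_deriv_add_two_mul_deriv hn hμ0.le hH]
    calc _ ≤ 16 * |H * μ0 - 1| * μ0 ^ 2 / (n : ℝ) ^ 3 :=
          abs_div_cube_le hμ0.le hH ((hbranch n hn) H hH).1 (by exact_mod_cast hn)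
            ((hbranch n hn).natCast_le_mul hn hH)
      _ ≤ _ := by gcongr; linarith
end

section
/- Fix real constants μ0 > 0 and H > 0, and real numbers h, η with η + h = H. For n ≥ 1 let k_n be the unique solution k of μ0 + k·tan(k·H) = 0 in ((2n−1)π/(2H), nπ/H), and set W_n(z) = sin(k_n(z+h))/cos(k_n H) on [−h, η]. Then for every twice continuously differentiable function F : [−h, η] → ℝ there exists a constant C > 0 (depending on F, μ0, H but not on n) such that |∫_{−h}^{η} F(z)·W_n(z) dz| ≤ C·n^{−1} for all n ≥ 1. -/
/-!
Integrating by parts once against `sin (kₙ (z + h)) = -(d/dz) cos (kₙ (z + h)) / kₙ` bounds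
`∫ F sin (kₙ (z + h))` by `C_F / kₙ`, and `kₙ ≥ n π / (2H)`. The factor `1 / cos (kₙ H)` stays
bounded because the dispersion relation gives `tan (kₙ H) = -μ0 / kₙ`, and
`|sec x| ≤ 1 + |tan x|`.
-/

open Real MeasureTheory intervalIntegral Set

theorem abs_integral_mul_sin_le {a b A B K : ℝ} {F F' : ℝ → ℝ} (hab : a ≤ b)
    (hF : ∀ x ∈ Icc a b, HasDerivWithinAt F (F' x) (Icc a b) x)
    (hF' : IntervalIntegrable F' volume a b)
    (hA : ∀ x ∈ Icc a b, |F x| ≤ A) (hB : ∀ x ∈ Icc a b, |F' x| ≤ B) (hK : 0 < K) (c : ℝ) :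
    |∫ x in a..b, F x * sin (K * (x + c))| ≤ (2 * A + B * (b - a)) / K := by
  set v : ℝ → ℝ := fun x => -cos (K * (x + c)) / K
  have hv : ∀ x, HasDerivAt v (sin (K * (x + c))) x := fun x => by
    refine ((((hasDerivAt_id' x).add_const c).const_mul K).cos.neg.div_const K).congr_deriv ?_
    field_simp
  have hv_le : ∀ x, |v x| ≤ K⁻¹ := fun x => by
    simpa [v, abs_div, abs_of_pos hK, div_eq_inv_mul] using
      mul_le_mul_of_nonneg_left (abs_cos_le_one (K * (x + c))) (inv_nonneg.2 hK.le)
  have hA0 : 0 ≤ A := (abs_nonneg _).trans (hA a (left_mem_Icc.2 hab))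
  have hB0 : 0 ≤ B := (abs_nonneg _).trans (hB a (left_mem_Icc.2 hab))
  have hFv : ∀ x ∈ Icc a b, |F x * v x| ≤ A * K⁻¹ := fun x hx => by
    rw [abs_mul]; exact mul_le_mul (hA x hx) (hv_le x) (abs_nonneg _) hA0
  have hrem : |∫ x in a..b, F' x * v x| ≤ B * K⁻¹ * (b - a) := by
    have := norm_integral_le_of_norm_le_const (a := a) (b := b) (C := B * K⁻¹)
      (f := fun x => F' x * v x) fun x hx => by
        rw [uIoc_of_le hab] at hx
        rw [Real.norm_eq_abs, abs_mul]
        exact mul_le_mul (hB x (Ioc_subset_Icc_self hx)) (hv_le x) (abs_nonneg _) hB0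
    rwa [Real.norm_eq_abs, abs_of_nonneg (sub_nonneg.2 hab)] at this
  rw [← uIcc_of_le hab] at hF
  rw [integral_mul_deriv_eq_deriv_mul_of_hasDerivWithinAt hF
    (fun x _ => (hv x).hasDerivWithinAt) hF' ((by fun_prop : Continuous fun x => sin (K * (x + c))).intervalIntegrable _ _)]
  calc |F b * v b - F a * v a - ∫ x in a..b, F' x * v x|
      ≤ |F b * v b| + |F a * v a| + |∫ x in a..b, F' x * v x| :=
        (abs_sub _ _).trans (add_le_add_left (abs_sub _ _) _)
    _ ≤ A * K⁻¹ + A * K⁻¹ + B * K⁻¹ * (b - a) := by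
        gcongr
        exacts [hFv b (right_mem_Icc.2 hab), hFv a (left_mem_Icc.2 hab)]
    _ = (2 * A + B * (b - a)) / K := by ring

theorem exists_abs_integral_mul_sin_le {a b : ℝ} {F : ℝ → ℝ} (hab : a < b)
    (hF : ContDiffOn ℝ 1 F (Icc a b)) :
    ∃ C, 0 ≤ C ∧ ∀ K, 0 < K → ∀ c, |∫ x in a..b, F x * sin (K * (x + c))| ≤ C / K := by
  have hs : UniqueDiffOn ℝ (Icc a b) := uniqueDiffOn_Icc hab
  have hF'c : ContinuousOn (derivWithin F (Icc a b)) (Icc a b) :=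
    hF.continuousOn_derivWithin hs le_rfl
  obtain ⟨A, hA⟩ := isCompact_Icc.exists_bound_of_continuousOn hF.continuousOn
  obtain ⟨B, hB⟩ := isCompact_Icc.exists_bound_of_continuousOn hF'c
  have hA0 : 0 ≤ A := (norm_nonneg _).trans (hA a (left_mem_Icc.2 hab.le))
  have hB0 : 0 ≤ B := (norm_nonneg _).trans (hB a (left_mem_Icc.2 hab.le))
  refine ⟨2 * A + B * (b - a), by nlinarith, fun K hK c => ?_⟩
  refine abs_integral_mul_sin_le hab.le (fun x hx => ?_) ?_ hA hB hK c
  · exact (hF.differentiableOn one_ne_zero x hx).hasDerivWithinAt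
  · exact (hF'c.mono (uIcc_of_le hab.le).subset).intervalIntegrable

theorem abs_inv_cos_le_one_add_abs_tan (x : ℝ) : |(cos x)⁻¹| ≤ 1 + |tan x| := by
  rcases eq_or_ne (cos x) 0 with h | h
  · rw [h, inv_zero, abs_zero]; positivity
  have hsec : (cos x)⁻¹ ^ 2 = 1 + tan x ^ 2 := by rw [inv_pow, ← inv_one_add_tan_sq h, inv_inv]
  have : |(cos x)⁻¹| ^ 2 ≤ (1 + |tan x|) ^ 2 := by
    rw [sq_abs, hsec]; nlinarith [sq_abs (tan x), abs_nonneg (tan x)]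
  exact pow_le_pow_iff_left₀ (abs_nonneg _) (by positivity) two_ne_zero |>.1 this

theorem abs_inv_cos_le_of_add_mul_tan_eq_zero {μ k H : ℝ} (hk : 0 < k)
    (h : μ + k * tan (k * H) = 0) : |(cos (k * H))⁻¹| ≤ 1 + |μ| / k := by
  have htan : tan (k * H) = -μ / k := by field_simp; linarith
  simpa [htan, abs_div, abs_of_pos hk] using abs_inv_cos_le_one_add_abs_tan (k * H)

theorem integral_against_Wn_decay_general (μ0 H h η : ℝ) (hH : 0 < H)
    (hηh : η + h = H)
    (k : ℕ → ℝ)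
    (hk : ∀ n : ℕ, 1 ≤ n →
      k n ∈ Set.Ioo ((2 * (n : ℝ) - 1) * π / (2 * H)) ((n : ℝ) * π / H) ∧
      μ0 + k n * Real.tan (k n * H) = 0)
    (F : ℝ → ℝ) (hF : ContDiffOn ℝ 2 F (Set.Icc (-h) η)) :
    ∃ C : ℝ, 0 < C ∧ ∀ n : ℕ, 1 ≤ n →
      |∫ z in (-h)..η, F z * (Real.sin (k n * (z + h)) / Real.cos (k n * H))| ≤
        C / (n : ℝ) := by
  obtain ⟨C, hC0, hC⟩ :=
    exists_abs_integral_mul_sin_le (by linarith : -h < η) (hF.of_le one_le_two)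
  set L := 2 * H / π with hL
  refine ⟨(C + 1) * L * (1 + |μ0| * L), by positivity, fun n hn => ?_⟩
  obtain ⟨⟨hlow, -⟩, hroot⟩ := hk n hn
  have hn1 : (1 : ℝ) ≤ n := by exact_mod_cast hn
  have hkn : n * π / (2 * H) ≤ k n := le_trans (by gcongr; linarith) hlow.le
  have hk0 : 0 < k n := lt_of_lt_of_le (by positivity) hkn
  have hinv_n : (k n)⁻¹ ≤ L / n :=
    calc (k n)⁻¹ ≤ (n * π / (2 * H))⁻¹ := inv_anti₀ (by positivity) hkn
      _ = L / n := by rw [inv_div, hL, div_div, mul_comm π]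
  have hinv : (k n)⁻¹ ≤ L := hinv_n.trans (div_le_self (by positivity) hn1)
  have hsplit : ∫ z in (-h)..η, F z * (sin (k n * (z + h)) / cos (k n * H))
      = (∫ z in (-h)..η, F z * sin (k n * (z + h))) * (cos (k n * H))⁻¹ := by
    simp only [div_eq_mul_inv, ← mul_assoc, intervalIntegral.integral_mul_const]
  rw [hsplit, abs_mul]
  calc _ ≤ C / k n * (1 + |μ0| / k n) :=
        mul_le_mul (hC _ hk0 h) (abs_inv_cos_le_of_add_mul_tan_eq_zero hk0 hroot)
          (abs_nonneg _) (by positivity)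
    _ ≤ (C + 1) * (L / n) * (1 + |μ0| * L) := by
        rw [div_eq_mul_inv, div_eq_mul_inv]
        gcongr
        linarith
    _ = (C + 1) * L * (1 + |μ0| * L) / n := by ring

/-- Assertion (ii) of Lemma 2 (Eq. (4.8b)): for any C² function `F` on `[−h, η]`,
`|∫ F·Wₙ| ≤ C·n⁻¹`, where `Wₙ(z) = sin(kₙ(z+h))/cos(kₙH)`. -/
theorem integral_against_Wn_decay (μ0 H h η : ℝ) (hμ0 : 0 < μ0) (hH : 0 < H)
    (hηh : η + h = H)
    (k : ℕ → ℝ)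
    (hk : ∀ n : ℕ, 1 ≤ n →
      k n ∈ Set.Ioo ((2 * (n : ℝ) - 1) * π / (2 * H)) ((n : ℝ) * π / H) ∧
      μ0 + k n * Real.tan (k n * H) = 0)
    (F : ℝ → ℝ) (hF : ContDiffOn ℝ 2 F (Set.Icc (-h) η)) :
    ∃ C : ℝ, 0 < C ∧ ∀ n : ℕ, 1 ≤ n →
      |∫ z in (-h)..η, F z * (Real.sin (k n * (z + h)) / Real.cos (k n * H))| ≤
        C / (n : ℝ) :=
  integral_against_Wn_decay_general μ0 H h η hH hηh k hk F hF
end
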